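/- arXiv:math/0603082 — 3 statements merged into one kernel-verified Lean document; each statement's English description precedes it below -/
import Mathlib

section
/- Let β_1, …, β_m be nonnegative integers with mean β̄ = (1/m)∑_{r=1}^m β_r, and let θ = ⌊β̄⌋ and f = β̄ − θ. Then for every convex function ψ : ℝ → ℝ, ∑_{r=1}^m ψ(β_r) ≥ m(1 − f)ψ(θ) + m f ψ(θ + 1). -/
open Finset

/-! A convex function lies above each of its secant lines outside the chord's interval. Every
`β r` is an integer, hence outside `(θ, θ + 1)`, so `ψ (β r)` dominates the affine function
`ψ θ + (ψ (θ + 1) - ψ θ) (x - θ)` at `x = β r`; summing over `r`, the right-hand side of the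
bound is exactly that affine function summed, since `∑ r, (β r - θ) = m f`. -/

theorem ConvexOn.secant_le_of_notMem_Ioo {𝕜 : Type*} [Field 𝕜] [LinearOrder 𝕜]
    [IsStrictOrderedRing 𝕜] {s : Set 𝕜} {f : 𝕜 → 𝕜} (hf : ConvexOn 𝕜 s f) {a b x : 𝕜}
    (ha : a ∈ s) (hb : b ∈ s) (hx : x ∈ s) (hab : a < b) (hxab : x ∉ Set.Ioo a b) :
    f a + (f b - f a) / (b - a) * (x - a) ≤ f x := by
  rcases lt_trichotomy x a with hxa | rfl | hax
  · have hslope := hf.secant_mono ha hx hb hxa.ne hab.ne' (hxa.trans hab).le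
    rw [div_le_iff_of_neg (sub_neg.2 hxa)] at hslope
    linarith
  · simp
  · have hbx : b ≤ x := not_lt.1 fun hxb => hxab ⟨hax, hxb⟩
    have hslope := hf.secant_mono ha hb hx hab.ne' hax.ne' hbx
    rw [le_div_iff₀ (sub_pos.2 hax)] at hslope
    linarith

theorem Nat.cast_notMem_Ioo_self_add_one (n k : ℕ) : (n : ℝ) ∉ Set.Ioo (k : ℝ) (k + 1) := by
  rintro ⟨hkn, hnk⟩
  have hkn : k < n := by exact_mod_cast hkn
  have hnk : n < k + 1 := by exact_mod_cast hnk
  omega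

theorem separable_convex_lower_bound_general (m : ℕ) (β : Fin m → ℕ)
    (βbar : ℝ) (hβbar : βbar = (∑ r, (β r : ℝ)) / m)
    (θ : ℕ)
    (f : ℝ) (hf : f = βbar - θ)
    (ψ : ℝ → ℝ) (hψ : ConvexOn ℝ Set.univ ψ) :
    (m : ℝ) * (1 - f) * ψ θ + (m : ℝ) * f * ψ (θ + 1) ≤ ∑ r, ψ (β r) := by
  have hsum : ∑ r, (β r : ℝ) = m * βbar := by
    refine hβbar ▸ (mul_div_cancel_of_imp' fun hm => ?_).symm
    obtain rfl : m = 0 := by exact_mod_cast hm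
    simp
  have hline (n : ℕ) : ψ θ + (ψ (θ + 1) - ψ θ) * (n - θ) ≤ ψ n := by
    simpa using hψ.secant_le_of_notMem_Ioo trivial trivial trivial (lt_add_one (θ : ℝ))
      (Nat.cast_notMem_Ioo_self_add_one n θ)
  calc (m : ℝ) * (1 - f) * ψ θ + (m : ℝ) * f * ψ (θ + 1)
      = ∑ r, (ψ θ + (ψ (θ + 1) - ψ θ) * (β r - θ)) := by
        simp only [sum_add_distrib, ← mul_sum, sum_sub_distrib, hsum, sum_const, card_univ,
          Fintype.card_fin, nsmul_eq_mul, hf]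
        ring
    _ ≤ ∑ r, ψ (β r) := sum_le_sum fun r _ => hline (β r)

/-- Lemma 3: for nonnegative integers β_1, …, β_m with mean β̄, integral part
θ = ⌊β̄⌋ and fractional part f = β̄ − θ, every convex function ψ satisfies
∑_{r=1}^m ψ(β_r) ≥ m(1 − f)ψ(θ) + m f ψ(θ + 1). -/
theorem separable_convex_lower_bound (m : ℕ) (hm : 1 ≤ m) (β : Fin m → ℕ)
    (βbar : ℝ) (hβbar : βbar = (∑ r, (β r : ℝ)) / m)
    (θ : ℕ) (hθ : θ = ⌊βbar⌋₊)
    (f : ℝ) (hf : f = βbar - θ)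
    (ψ : ℝ → ℝ) (hψ : ConvexOn ℝ Set.univ ψ) :
    (m : ℝ) * (1 - f) * ψ θ + (m : ℝ) * f * ψ (θ + 1) ≤ ∑ r, ψ (β r) :=
  separable_convex_lower_bound_general m β βbar hβbar θ f hf ψ hψ
end

section
/- For any lattice design X with n runs, s factors and q levels, and every j ∈ {1, …, s}: 2 ∑_{1 ≤ i < k ≤ n} C(β(x_i, x_k), j) − C(s, j)(n²/q^j − n) = ∑_{u ⊆ {1,…,s}, |u| = j} ∑_{x ∈ (Fin q)^u} (N_x^{(u)} − n/q^j)², where N_x^{(u)} is the number of runs whose coordinates in u equal the level combination x. -/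
open Finset

/-- The coincidence number β(x, w) = #{j : x_j = w_j} of two lattice points. -/
def coincidence {s q : ℕ} (x w : Fin s → Fin q) : ℕ :=
  (univ.filter fun j => x j = w j).card

/-- The index set of pairs 1 ≤ i < k ≤ n. -/
def pairs (n : ℕ) : Finset (Fin n × Fin n) := univ.filter fun p => p.1 < p.2

/-- `N_x^{(u)}`: the number of runs of `X` whose `u`-coordinates equal the level
combination `x`. -/
def projCount {n s q : ℕ} (X : Fin n → Fin s → Fin q) (u : Finset (Fin s))
    (x : ↥u → Fin q) : ℕ :=
  (univ.filter fun i => ∀ j : ↥u, X i j = x j).card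

variable {n s q : ℕ} (X : Fin n → Fin s → Fin q)

lemma sum_projCount (u : Finset (Fin s)) :
    ∑ x : ↥u → Fin q, projCount X u x = n := by
  unfold projCount
  simp only [card_filter]
  rw [Finset.sum_comm]
  have h : ∀ i : Fin n,
      (∑ x : ↥u → Fin q, if ∀ j : ↥u, X i j = x j then 1 else 0) = 1 := by
    intro i
    rw [Finset.sum_eq_single (fun j : ↥u => X i j)]
    · simp
    · intro x _ hx
      rw [if_neg]
      intro h
      exact hx (funext fun j => (h j).symm)
    · simp
  rw [Finset.sum_congr rfl fun i _ => h i]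
  simp

lemma sum_sq_projCount (u : Finset (Fin s)) :
    ∑ x : ↥u → Fin q, (projCount X u x) ^ 2 =
    ∑ i : Fin n, ∑ k : Fin n, (if ∀ t : ↥u, X i t = X k t then 1 else 0) := by
  unfold projCount
  simp only [card_filter, sq]
  have h : ∀ x : ↥u → Fin q,
      ((∑ i : Fin n, if ∀ j : ↥u, X i j = x j then 1 else 0) *
       (∑ i : Fin n, if ∀ j : ↥u, X i j = x j then 1 else 0)) =
      ∑ i : Fin n, ∑ k : Fin n,
        (if (∀ j : ↥u, X i j = x j) ∧ (∀ j : ↥u, X k j = x j) then 1 else 0) := by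
    intro x
    rw [Finset.sum_mul_sum]
    congr 1; funext i; congr 1; funext k
    split_ifs <;> simp_all
  simp only [h]
  rw [Finset.sum_comm]
  congr 1; funext i
  rw [Finset.sum_comm]
  congr 1; funext k
  by_cases hik : ∀ t : ↥u, X i t = X k t
  · rw [if_pos hik, Finset.sum_eq_single (fun j : ↥u => X i j)]
    · rw [if_pos ⟨fun _ => rfl, fun t => (hik t).symm⟩]
    · intro x _ hx
      rw [if_neg]
      rintro ⟨h1, -⟩
      exact hx (funext fun j => (h1 j).symm)
    · simp
  · rw [if_neg hik, Finset.sum_eq_zero]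
    intro x _
    rw [if_neg]
    rintro ⟨h1, h2⟩
    exact hik fun t => (h1 t).trans (h2 t).symm

lemma coincidence_comm (x w : Fin s → Fin q) : coincidence x w = coincidence w x := by
  unfold coincidence
  congr 1
  ext t
  simp [eq_comm]

lemma coincidence_self (x : Fin s → Fin q) : coincidence x x = s := by
  simp [coincidence]

lemma sum_powersetCard_ite (i k : Fin n) (j : ℕ) :
    (∑ u ∈ powersetCard j (univ : Finset (Fin s)),
      if ∀ t : ↥u, X i t = X k t then 1 else 0) = (coincidence (X i) (X k)).choose j := by
  rw [← card_filter]
  have h : (powersetCard j (univ : Finset (Fin s))).filter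
        (fun v : Finset (Fin s) => ∀ t : ↥v, X i ↑t = X k ↑t)
      = powersetCard j (univ.filter fun t => X i t = X k t) := by
    ext v
    simp only [mem_filter, mem_powersetCard, subset_iff, mem_univ, true_and,
      Subtype.forall]
    tauto
  rw [h, card_powersetCard]
  rfl

lemma sum_split (f : Fin n × Fin n → ℕ) (hsym : ∀ p : Fin n × Fin n, f (p.2, p.1) = f p) :
    ∑ p : Fin n × Fin n, f p = 2 * ∑ p ∈ pairs n, f p + ∑ i : Fin n, f (i, i) := by
  classical
  rw [← Finset.sum_filter_add_sum_filter_not univ (fun p : Fin n × Fin n => p.1 < p.2)]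
  have h2 : (univ : Finset (Fin n × Fin n)).filter (fun p => ¬ p.1 < p.2)
      = (univ.filter fun p : Fin n × Fin n => p.2 < p.1)
        ∪ (univ.filter fun p : Fin n × Fin n => p.1 = p.2) := by
    ext p
    simp only [mem_filter, mem_union, mem_univ, true_and, not_lt, Fin.lt_def, Fin.le_def,
      Fin.ext_iff]
    omega
  have hdisj : Disjoint (univ.filter fun p : Fin n × Fin n => p.2 < p.1)
      (univ.filter fun p : Fin n × Fin n => p.1 = p.2) := by
    rw [Finset.disjoint_left]
    intro p hp hq
    simp only [mem_filter, mem_univ, true_and] at hp hq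
    rw [hq] at hp
    exact lt_irrefl _ hp
  rw [h2, Finset.sum_union hdisj]
  have h3 : ∑ p ∈ (univ.filter fun p : Fin n × Fin n => p.2 < p.1), f p
      = ∑ p ∈ pairs n, f p := by
    apply Finset.sum_nbij' (fun p : Fin n × Fin n => (p.2, p.1))
      (fun p : Fin n × Fin n => (p.2, p.1))
    · intro p hp; simp only [mem_filter, mem_univ, true_and] at hp ⊢
      simpa [pairs] using hp
    · intro p hp; simp only [pairs, mem_filter, mem_univ, true_and] at hp ⊢
      simpa using hp
    · intro p _; rfl
    · intro p _; rfl
    · intro p _; exact (hsym p).symm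
  have h4 : ∑ p ∈ (univ.filter fun p : Fin n × Fin n => p.1 = p.2), f p
      = ∑ i : Fin n, f (i, i) := by
    apply Finset.sum_nbij' (fun p : Fin n × Fin n => p.1) (fun i : Fin n => (i, i))
    · intro p _; exact mem_univ _
    · intro i _; simp
    · intro p hp
      simp only [mem_filter, mem_univ, true_and] at hp
      exact Prod.ext rfl hp
    · intro i _; rfl
    · intro p hp
      simp only [mem_filter, mem_univ, true_and] at hp
      rw [show ((p.1, p.1) : Fin n × Fin n) = p from Prod.ext rfl hp]
  rw [h3, h4, pairs]
  ring

lemma key (j : ℕ) :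
    ∑ u ∈ powersetCard j (univ : Finset (Fin s)), ∑ x : ↥u → Fin q, (projCount X u x) ^ 2
      = 2 * ∑ p ∈ pairs n, (coincidence (X p.1) (X p.2)).choose j + n * s.choose j := by
  have step : ∀ u ∈ powersetCard j (univ : Finset (Fin s)),
      ∑ x : ↥u → Fin q, (projCount X u x) ^ 2
        = ∑ i : Fin n, ∑ k : Fin n, (if ∀ t : ↥u, X i t = X k t then 1 else 0) :=
    fun u _ => sum_sq_projCount X u
  rw [Finset.sum_congr rfl step, Finset.sum_comm]
  have step2 : ∀ i : Fin n,
      (∑ u ∈ powersetCard j (univ : Finset (Fin s)), ∑ k : Fin n,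
        (if ∀ t : ↥u, X i t = X k t then 1 else 0))
      = ∑ k : Fin n, (coincidence (X i) (X k)).choose j := by
    intro i
    rw [Finset.sum_comm]
    exact Finset.sum_congr rfl fun k _ => sum_powersetCard_ite X i k j
  rw [Finset.sum_congr rfl fun i _ => step2 i]
  rw [show (∑ i : Fin n, ∑ k : Fin n, (coincidence (X i) (X k)).choose j)
      = ∑ p : Fin n × Fin n, (coincidence (X p.1) (X p.2)).choose j from
    (Fintype.sum_prod_type (f := fun p : Fin n × Fin n =>
      (coincidence (X p.1) (X p.2)).choose j)).symm]
  rw [sum_split (fun p => (coincidence (X p.1) (X p.2)).choose j)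
    (fun p => by simp [coincidence_comm])]
  simp [coincidence_self]

/-- Theorem 2 (first part): the Schur-combinatorial criterion
Ψ_C(X; j) = 2 ∑_{i<k} C(β(x_i,x_k), j) − C(s,j)(n²/qʲ − n) equals the total squared
deviation of projection cell counts from `n/qʲ` over all `j`-factor projections. -/
theorem schur_combinatorial_projection (n s q : ℕ) (hq : 2 ≤ q)
    (X : Fin n → Fin s → Fin q) (j : ℕ) (hj1 : 1 ≤ j) (hjs : j ≤ s) :
    2 * ∑ p ∈ pairs n, ((coincidence (X p.1) (X p.2)).choose j : ℝ)
        - (s.choose j : ℝ) * ((n : ℝ) ^ 2 / (q : ℝ) ^ j - n)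
      = ∑ u ∈ powersetCard j (univ : Finset (Fin s)),
          ∑ x : ↥u → Fin q, ((projCount X u x : ℝ) - (n : ℝ) / (q : ℝ) ^ j) ^ 2 := by
  have hq0 : (q : ℝ) ≠ 0 := by
    have : 0 < q := by omega
    exact_mod_cast this.ne'
  have hqj : ((q : ℝ)) ^ j ≠ 0 := pow_ne_zero _ hq0
  set c : ℝ := (n : ℝ) / (q : ℝ) ^ j with hc
  have hcard : ∀ u ∈ powersetCard j (univ : Finset (Fin s)),
      Fintype.card (↥u → Fin q) = q ^ j := by
    intro u hu
    rw [mem_powersetCard] at hu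
    rw [Fintype.card_fun, Fintype.card_fin, Fintype.card_coe, hu.2]
  have hu : ∀ u ∈ powersetCard j (univ : Finset (Fin s)),
      ∑ x : ↥u → Fin q, ((projCount X u x : ℝ) - c) ^ 2
        = ((∑ x : ↥u → Fin q, (projCount X u x) ^ 2 : ℕ) : ℝ)
          - (n : ℝ) ^ 2 / (q : ℝ) ^ j := by
    intro u hu
    have e1 : ∑ x : ↥u → Fin q, ((projCount X u x : ℝ)) = n := by
      rw [← Nat.cast_sum, sum_projCount]
    have expand : ∀ x : ↥u → Fin q, ((projCount X u x : ℝ) - c) ^ 2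
        = ((projCount X u x : ℝ)) ^ 2 - 2 * c * ((projCount X u x : ℝ)) + c ^ 2 :=
      fun x => by ring
    rw [Finset.sum_congr rfl fun x _ => expand x, Finset.sum_add_distrib,
      Finset.sum_sub_distrib, ← Finset.mul_sum, e1, Finset.sum_const, card_univ,
      hcard u hu, Nat.cast_sum, nsmul_eq_mul, hc]
    push_cast
    generalize hg : ((q : ℝ)) ^ j = Q at hqj ⊢
    field_simp
    ring
  have keyR : ((∑ u ∈ powersetCard j (univ : Finset (Fin s)),
        ∑ x : ↥u → Fin q, (projCount X u x) ^ 2 : ℕ) : ℝ)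
      = 2 * (∑ p ∈ pairs n, ((coincidence (X p.1) (X p.2)).choose j : ℝ))
        + (n : ℝ) * (s.choose j : ℝ) := by
    rw [key X j]
    push_cast
    ring
  rw [Finset.sum_congr rfl hu, Finset.sum_sub_distrib, Finset.sum_const,
    card_powersetCard, card_univ, Fintype.card_fin, nsmul_eq_mul]
  conv_rhs => rw [← Nat.cast_sum]
  rw [keyR]
  ring
end

section
/- For any balanced lattice design X ∈ U(n, q^s) and every j ∈ {1, …, s}: B_j²(X) = (n²/q^{2j}) ∑_{k=1}^{j} C(s − k, j − k) A_k(X), where B_j²(X) = q^{−j} Ψ_C(X; j). -/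
open Finset

/-- A design `X ∈ U(n, q^s)` is balanced: `q ∣ n` and every level occurs exactly
`n / q` times in each column. -/
def IsBalanced {n s q : ℕ} (X : Fin n → Fin s → Fin q) : Prop :=
  q ∣ n ∧ ∀ (j : Fin s) (ℓ : Fin q),
    (univ.filter fun i => X i j = ℓ).card = n / q

/-- The Schur-combinatorial criterion
Ψ_C(X; j) = 2 ∑_{i<k} C(β(x_i,x_k), j) − C(s,j)(n²/qʲ − n). -/
noncomputable def PsiC {n s q : ℕ} (X : Fin n → Fin s → Fin q) (j : ℕ) : ℝ :=
  2 * ∑ p ∈ pairs n, ((coincidence (X p.1) (X p.2)).choose j : ℝ)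
    - (s.choose j : ℝ) * ((n : ℝ) ^ 2 / (q : ℝ) ^ j - n)

/-- The contrast χ_v(X) = ∑_i ∏_j ω^{v_j x_{ij}}, with ω = exp(2πi/q). -/
noncomputable def contrast {n s q : ℕ} (X : Fin n → Fin s → Fin q)
    (v : Fin s → Fin q) : ℂ :=
  ∑ i, ∏ j, Complex.exp (2 * (Real.pi : ℂ) * Complex.I / (q : ℂ)) ^ ((v j : ℕ) * (X i j : ℕ))

/-- The weight wt(v) = #{j : v_j ≠ 0}. -/
def wt {s q : ℕ} (v : Fin s → Fin q) : ℕ :=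
  (univ.filter fun j => (v j : ℕ) ≠ 0).card

/-- The generalized word-length pattern A_k(X) = n⁻² ∑_{wt(v)=k} |χ_v(X)|². -/
noncomputable def wlp {n s q : ℕ} (X : Fin n → Fin s → Fin q) (k : ℕ) : ℝ :=
  (∑ v ∈ univ.filter (fun v : Fin s → Fin q => wt v = k),
    ‖contrast X v‖ ^ 2) / (n : ℝ) ^ 2

/-! ### Auxiliary machinery -/

/-- The root of unity ω = exp(2πi/q). -/
noncomputable def auxOm (q : ℕ) : ℂ := Complex.exp (2 * (Real.pi : ℂ) * Complex.I / (q : ℂ))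

/-- The coefficient c(k) = C(s−k, j−k) for k ≤ j, and 0 otherwise. -/
def auxCC (s j k : ℕ) : ℕ := if k ≤ j then (s - k).choose (j - k) else 0

lemma aux_counting (s j : ℕ) (S : Finset (Fin s)) :
    ((powersetCard j (univ : Finset (Fin s))).filter (fun T => S ⊆ T)).card = auxCC s j S.card := by
  classical
  unfold auxCC
  by_cases h : S.card ≤ j
  · rw [if_pos h]
    have hcs : Sᶜ.card = s - S.card := by
      rw [Finset.card_compl, Fintype.card_fin]
    rw [← hcs, ← Finset.card_powersetCard]
    apply Finset.card_nbij' (fun T => T \ S) (fun T => T ∪ S)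
    · intro T hT
      rw [Finset.mem_coe, Finset.mem_filter, Finset.mem_powersetCard] at hT
      obtain ⟨⟨-, hcard⟩, hST⟩ := hT
      rw [Finset.mem_coe, Finset.mem_powersetCard]
      refine ⟨fun x hx => ?_, ?_⟩
      · rw [Finset.mem_sdiff] at hx; simpa using hx.2
      · rw [Finset.card_sdiff_of_subset hST, hcard]
    · intro T hT
      rw [Finset.mem_coe, Finset.mem_powersetCard] at hT
      obtain ⟨hTc, hcard⟩ := hT
      have hdisj : Disjoint T S := by
        refine Finset.disjoint_left.2 fun x hx hxS => ?_
        have := hTc hx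
        simp [Finset.mem_compl] at this
        exact this hxS
      rw [Finset.mem_coe, Finset.mem_filter, Finset.mem_powersetCard]
      refine ⟨⟨Finset.subset_univ _, ?_⟩, Finset.subset_union_right⟩
      rw [Finset.card_union_of_disjoint hdisj, hcard]
      omega
    · intro T hT
      rw [Finset.mem_coe, Finset.mem_filter] at hT
      exact Finset.sdiff_union_of_subset hT.2
    · intro T hT
      rw [Finset.mem_coe, Finset.mem_powersetCard] at hT
      have hdisj : Disjoint T S := by
        refine Finset.disjoint_left.2 fun x hx hxS => ?_
        have := hT.1 hx
        simp [Finset.mem_compl] at this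
        exact this hxS
      show (T ∪ S) \ S = T
      rw [Finset.union_sdiff_right, Finset.sdiff_eq_self_iff_disjoint]
      exact hdisj
  · rw [if_neg h, Finset.card_eq_zero, Finset.filter_eq_empty_iff]
    intro T hT hST
    exact h (le_trans (Finset.card_le_card hST) (le_of_eq (Finset.mem_powersetCard.1 hT).2))

lemma auxOm_pow_q (q : ℕ) (hq : q ≠ 0) : auxOm q ^ q = 1 := by
  unfold auxOm
  rw [← Complex.exp_nat_mul]
  rw [mul_div_cancel₀ _ (by exact_mod_cast hq : (q : ℂ) ≠ 0)]
  exact Complex.exp_two_pi_mul_I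

lemma aux_conj_om (q : ℕ) : (starRingEnd ℂ) (auxOm q) = (auxOm q)⁻¹ := by
  unfold auxOm
  rw [← Complex.exp_conj, ← Complex.exp_neg]
  congr 1
  rw [map_div₀, map_mul, map_mul, Complex.conj_I, Complex.conj_ofReal, Complex.conj_natCast,
    map_ofNat]
  ring

lemma aux_coord (q : ℕ) (hq : 2 ≤ q) (a b : Fin q) :
    ∑ x : Fin q, ((auxOm q) ^ ((x : ℕ) * (a : ℕ)) * ((starRingEnd ℂ) (auxOm q)) ^ ((x : ℕ) * (b : ℕ)))
      = if a = b then (q : ℂ) else 0 := by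
  have hq0 : q ≠ 0 := by omega
  have hω1 := auxOm_pow_q q hq0
  have hprim : IsPrimitiveRoot (auxOm q) q := Complex.isPrimitiveRoot_exp q hq0
  have hne : auxOm q ≠ 0 := Complex.exp_ne_zero _
  set z : ℂ := (auxOm q) ^ (a : ℕ) * ((auxOm q) ^ (b : ℕ))⁻¹ with hz
  have hterm : ∀ x : Fin q,
      (auxOm q) ^ ((x:ℕ) * (a:ℕ)) * ((starRingEnd ℂ) (auxOm q)) ^ ((x:ℕ)*(b:ℕ)) = z ^ (x:ℕ) := by
    intro x
    rw [aux_conj_om, mul_comm (x:ℕ) (a:ℕ), mul_comm (x:ℕ) (b:ℕ), pow_mul, pow_mul, inv_pow,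
      ← mul_pow]
  rw [Finset.sum_congr rfl (fun x _ => hterm x)]
  by_cases hab : a = b
  · have hz1 : z = 1 := by
      rw [hz, hab, mul_inv_cancel₀ (pow_ne_zero _ hne)]
    rw [if_pos hab]
    simp [hz1]
  · rw [if_neg hab]
    have hzq : z ^ q = 1 := by
      rw [hz, mul_pow, ← pow_mul, mul_comm (a:ℕ) q, pow_mul, hω1, one_pow, inv_pow,
        ← pow_mul, mul_comm (b:ℕ) q, pow_mul, hω1, one_pow, inv_one, mul_one]
    have hz1 : z ≠ 1 := by
      intro h1
      rw [hz, mul_inv_eq_one₀ (pow_ne_zero _ hne)] at h1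
      exact hab (Fin.val_injective (hprim.pow_inj a.isLt b.isLt h1))
    rw [Fin.sum_univ_eq_sum_range (fun i => z ^ i) q, geom_sum_eq hz1, hzq, sub_self, zero_div]

lemma aux_filter_supp_eq (s q : ℕ) [NeZero q] (T : Finset (Fin s)) :
    (univ : Finset (Fin s → Fin q)).filter
        (fun v => (univ.filter fun t => (v t : ℕ) ≠ 0) ⊆ T)
      = Fintype.piFinset (fun t => if t ∈ T then (univ : Finset (Fin q)) else {0}) := by
  classical
  ext v
  simp only [Finset.mem_filter, Finset.mem_univ, true_and, Fintype.mem_piFinset,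
    Finset.subset_iff]
  constructor
  · intro h t
    by_cases ht : t ∈ T
    · simp [ht]
    · simp only [ht, if_neg, Finset.mem_singleton]
      by_contra hv
      have : (v t : ℕ) ≠ 0 := by
        exact fun h0 => hv (by rw [if_neg not_false, Finset.mem_singleton]; exact Fin.ext (by rw [h0, Fin.val_zero]))
      exact ht (h (by simpa using this))
  · intro h t ht
    by_contra htT
    have := h t
    rw [if_neg htT, Finset.mem_singleton] at this
    exact ht (by rw [this]; simp)

lemma aux_perpair (s q j : ℕ) (hq : 2 ≤ q) (u w : Fin s → Fin q) :
    ∑ v : Fin s → Fin q, (auxCC s j (wt v) : ℂ) *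
        ∏ t, ((auxOm q) ^ ((v t : ℕ) * (u t : ℕ)) *
          ((starRingEnd ℂ) (auxOm q)) ^ ((v t : ℕ) * (w t : ℕ)))
      = (q : ℂ) ^ j * ((coincidence u w).choose j : ℂ) := by
  classical
  haveI : NeZero q := ⟨by omega⟩
  set f : Fin s → Fin q → ℂ := fun t a =>
    (auxOm q) ^ ((a : ℕ) * (u t : ℕ)) * ((starRingEnd ℂ) (auxOm q)) ^ ((a : ℕ) * (w t : ℕ)) with hf
  have h1 : ∀ v : Fin s → Fin q, (auxCC s j (wt v) : ℂ)
      = ∑ T ∈ powersetCard j (univ : Finset (Fin s)),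
          if (univ.filter fun t => (v t : ℕ) ≠ 0) ⊆ T then (1 : ℂ) else 0 := by
    intro v
    rw [← Finset.natCast_card_filter, aux_counting s j _]
    rfl
  calc
    ∑ v : Fin s → Fin q, (auxCC s j (wt v) : ℂ) * ∏ t, f t (v t)
        = ∑ v : Fin s → Fin q, ∑ T ∈ powersetCard j (univ : Finset (Fin s)),
            (if (univ.filter fun t => (v t : ℕ) ≠ 0) ⊆ T then (1 : ℂ) else 0) * ∏ t, f t (v t) := by
          refine Finset.sum_congr rfl fun v _ => ?_
          rw [h1 v, Finset.sum_mul]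
    _ = ∑ T ∈ powersetCard j (univ : Finset (Fin s)), ∑ v ∈ (univ : Finset (Fin s → Fin q)).filter
            (fun v => (univ.filter fun t => (v t : ℕ) ≠ 0) ⊆ T), ∏ t, f t (v t) := by
          rw [Finset.sum_comm]
          refine Finset.sum_congr rfl fun T _ => ?_
          rw [Finset.sum_filter]
          refine Finset.sum_congr rfl fun v _ => ?_
          split <;> simp
    _ = ∑ T ∈ powersetCard j (univ : Finset (Fin s)),
            ∏ t ∈ T, (if u t = w t then (q:ℂ) else 0) := by
          refine Finset.sum_congr rfl fun T _ => ?_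
          rw [aux_filter_supp_eq s q T, ← Finset.prod_univ_sum]
          have hfac : ∀ t, (∑ a ∈ (if t ∈ T then (univ : Finset (Fin q)) else {0}), f t a)
              = if t ∈ T then (if u t = w t then (q:ℂ) else 0) else 1 := by
            intro t
            by_cases ht : t ∈ T
            · rw [if_pos ht, if_pos ht, ← aux_coord q hq (u t) (w t)]
            · rw [if_neg ht, if_neg ht, Finset.sum_singleton]
              simp [hf]
          rw [Finset.prod_congr rfl fun t _ => hfac t]
          rw [Finset.prod_ite_mem, Finset.univ_inter]
    _ = (q : ℂ) ^ j * ((coincidence u w).choose j : ℂ) := by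
          have hprod : ∀ T ∈ powersetCard j (univ : Finset (Fin s)),
              (∏ t ∈ T, (if u t = w t then (q:ℂ) else 0))
              = if T ⊆ univ.filter (fun t => u t = w t) then (q:ℂ)^j else 0 := by
            intro T hT
            by_cases hTE : T ⊆ univ.filter (fun t => u t = w t)
            · rw [if_pos hTE,
                Finset.prod_congr rfl (fun t ht => if_pos ((Finset.mem_filter.1 (hTE ht)).2)),
                Finset.prod_const, (Finset.mem_powersetCard.1 hT).2]
            · rw [if_neg hTE]
              obtain ⟨t, htT, hne⟩ := Finset.not_subset.1 hTE
              exact Finset.prod_eq_zero htT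
                (if_neg (fun h => hne (Finset.mem_filter.2 ⟨Finset.mem_univ t, h⟩)))
          rw [Finset.sum_congr rfl hprod, Finset.sum_ite, Finset.sum_const_zero, add_zero,
            Finset.sum_const]
          have hfe : (powersetCard j (univ : Finset (Fin s))).filter
                (fun T => T ⊆ univ.filter fun t => u t = w t)
              = powersetCard j (univ.filter fun t => u t = w t) := by
            ext T
            simp only [Finset.mem_filter, Finset.mem_powersetCard]
            constructor
            · rintro ⟨⟨-, hc⟩, hs⟩; exact ⟨hs, hc⟩
            · rintro ⟨hs, hc⟩; exact ⟨⟨Finset.subset_univ _, hc⟩, hs⟩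
          rw [hfe, Finset.card_powersetCard, nsmul_eq_mul]
          unfold coincidence
          ring

lemma aux_globalC (n s q j : ℕ) (hq : 2 ≤ q) (X : Fin n → Fin s → Fin q) :
    ∑ v : Fin s → Fin q, (auxCC s j (wt v) : ℂ) * (contrast X v * (starRingEnd ℂ) (contrast X v))
      = (q : ℂ) ^ j * ∑ p : Fin n × Fin n, ((coincidence (X p.1) (X p.2)).choose j : ℂ) := by
  classical
  have hexp : ∀ v : Fin s → Fin q, contrast X v * (starRingEnd ℂ) (contrast X v)
      = ∑ p : Fin n × Fin n, ∏ t,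
          ((auxOm q) ^ ((v t : ℕ) * (X p.1 t : ℕ)) *
            ((starRingEnd ℂ) (auxOm q)) ^ ((v t : ℕ) * (X p.2 t : ℕ))) := by
    intro v
    unfold contrast auxOm
    rw [map_sum, Finset.sum_mul_sum, Fintype.sum_prod_type]
    refine Finset.sum_congr rfl fun i _ => Finset.sum_congr rfl fun l _ => ?_
    rw [map_prod, ← Finset.prod_mul_distrib]
    refine Finset.prod_congr rfl fun t _ => ?_
    rw [map_pow]
  calc
    ∑ v : Fin s → Fin q, (auxCC s j (wt v) : ℂ) * (contrast X v * (starRingEnd ℂ) (contrast X v))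
        = ∑ v : Fin s → Fin q, ∑ p : Fin n × Fin n, (auxCC s j (wt v) : ℂ) * ∏ t,
            ((auxOm q) ^ ((v t : ℕ) * (X p.1 t : ℕ)) *
              ((starRingEnd ℂ) (auxOm q)) ^ ((v t : ℕ) * (X p.2 t : ℕ))) := by
          refine Finset.sum_congr rfl fun v _ => ?_
          rw [hexp v, Finset.mul_sum]
    _ = ∑ p : Fin n × Fin n, ∑ v : Fin s → Fin q, (auxCC s j (wt v) : ℂ) * ∏ t,
            ((auxOm q) ^ ((v t : ℕ) * (X p.1 t : ℕ)) *
              ((starRingEnd ℂ) (auxOm q)) ^ ((v t : ℕ) * (X p.2 t : ℕ))) := Finset.sum_comm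
    _ = ∑ p : Fin n × Fin n, (q : ℂ) ^ j * ((coincidence (X p.1) (X p.2)).choose j : ℂ) := by
          exact Finset.sum_congr rfl fun p _ => aux_perpair s q j hq (X p.1) (X p.2)
    _ = _ := by rw [Finset.mul_sum]

lemma aux_globalR (n s q j : ℕ) (hq : 2 ≤ q) (X : Fin n → Fin s → Fin q) :
    ∑ v : Fin s → Fin q, (auxCC s j (wt v) : ℝ) * ‖contrast X v‖ ^ 2
      = (q : ℝ) ^ j * ∑ p : Fin n × Fin n, ((coincidence (X p.1) (X p.2)).choose j : ℝ) := by
  have h := aux_globalC n s q j hq X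
  have habs : ∀ z : ℂ, ((‖z‖ : ℂ)) ^ 2 = z * (starRingEnd ℂ) z := by
    intro z
    rw [← Complex.ofReal_pow, Complex.sq_norm, Complex.mul_conj]
  apply Complex.ofReal_injective
  push_cast
  simp_rw [habs]
  exact h

lemma aux_coincidence_self {s q : ℕ} (x : Fin s → Fin q) : coincidence x x = s := by
  unfold coincidence
  simp

lemma aux_coincidence_comm {s q : ℕ} (x w : Fin s → Fin q) : coincidence x w = coincidence w x := by
  unfold coincidence
  congr 1
  ext t
  simp [eq_comm]

lemma aux_sum_pairs_decomp (n : ℕ) (F : Fin n × Fin n → ℝ)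
    (hsymm : ∀ p, F (p.2, p.1) = F p) :
    ∑ p : Fin n × Fin n, F p = 2 * ∑ p ∈ pairs n, F p + ∑ i : Fin n, F (i, i) := by
  classical
  rw [← Finset.sum_filter_add_sum_filter_not univ (fun p : Fin n × Fin n => p.1 < p.2)]
  have h2 : (univ.filter (fun p : Fin n × Fin n => ¬ p.1 < p.2))
      = (univ.filter (fun p : Fin n × Fin n => p.2 < p.1)) ∪
        (univ.filter (fun p : Fin n × Fin n => p.1 = p.2)) := by
    ext p
    simp only [Finset.mem_filter, Finset.mem_univ, true_and, Finset.mem_union]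
    rcases lt_trichotomy p.1 p.2 with h | h | h
    · constructor
      · intro hc; exact absurd h hc
      · rintro (hc | hc) <;> omega
    · constructor
      · intro _; right; exact Fin.ext (by omega)
      · intro _; omega
    · constructor
      · intro _; left; exact h
      · intro _; omega
  rw [h2, Finset.sum_union]
  · have h3 : ∑ p ∈ univ.filter (fun p : Fin n × Fin n => p.2 < p.1), F p
        = ∑ p ∈ pairs n, F p := by
      refine Finset.sum_nbij' Prod.swap Prod.swap ?_ ?_ ?_ ?_ ?_
      · intro p hp
        simp only [Finset.mem_filter, Finset.mem_univ, true_and] at hp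
        simp [pairs, hp]
      · intro p hp
        simp only [pairs, Finset.mem_filter, Finset.mem_univ, true_and] at hp
        simp [hp]
      · intro p _; simp
      · intro p _; simp
      · intro p _
        exact (hsymm p).symm
    have h4 : ∑ p ∈ univ.filter (fun p : Fin n × Fin n => p.1 = p.2), F p
        = ∑ i : Fin n, F (i, i) := by
      refine Finset.sum_nbij' (fun p => p.1) (fun i => (i, i)) ?_ ?_ ?_ ?_ ?_
      · intro p _; simp
      · intro i _; simp
      · intro p hp
        simp only [Finset.mem_filter, Finset.mem_univ, true_and] at hp
        exact Prod.ext rfl hp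
      · intro i _; rfl
      · intro p hp
        simp only [Finset.mem_filter, Finset.mem_univ, true_and] at hp
        rw [show ((p.1, p.1) : Fin n × Fin n) = p from Prod.ext rfl hp]
    rw [h3, h4]
    show ∑ x ∈ filter (fun x : Fin n × Fin n => x.1 < x.2) univ, F x + _ = _
    rw [show filter (fun x : Fin n × Fin n => x.1 < x.2) univ = pairs n from rfl]
    ring
  · refine Finset.disjoint_left.2 fun p hp hp' => ?_
    simp only [Finset.mem_filter, Finset.mem_univ, true_and] at hp hp'
    omega

lemma aux_wt_le {s q : ℕ} (v : Fin s → Fin q) : wt v ≤ s := by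
  unfold wt
  calc (univ.filter fun j => (v j : ℕ) ≠ 0).card ≤ (univ : Finset (Fin s)).card :=
        Finset.card_filter_le _ _
    _ = s := by simp

lemma aux_wt_eq_zero_filter (s q : ℕ) (hq : 2 ≤ q) :
    (univ : Finset (Fin s → Fin q)).filter (fun v => wt v = 0)
      = {fun _ => (⟨0, by omega⟩ : Fin q)} := by
  classical
  ext v
  simp only [Finset.mem_filter, Finset.mem_univ, true_and, Finset.mem_singleton]
  unfold wt
  rw [Finset.card_eq_zero, Finset.filter_eq_empty_iff]
  constructor
  · intro h
    funext t
    have := h (Finset.mem_univ t)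
    simp only [ne_eq, not_not] at this
    exact Fin.ext (by simpa using this)
  · intro h t _
    simp only [ne_eq, not_not]
    rw [h]

lemma aux_contrast_zero (n s q : ℕ) (hq : 2 ≤ q) (X : Fin n → Fin s → Fin q) :
    contrast X (fun _ => (⟨0, by omega⟩ : Fin q)) = n := by
  unfold contrast
  simp

lemma aux_grouping (n s q j : ℕ) (hq : 2 ≤ q) (hjs : j ≤ s) (X : Fin n → Fin s → Fin q) :
    ∑ v : Fin s → Fin q, (auxCC s j (wt v) : ℝ) * ‖contrast X v‖ ^ 2
      = (s.choose j : ℝ) * (n : ℝ) ^ 2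
        + ∑ k ∈ Icc 1 j, ((s - k).choose (j - k) : ℝ) *
            ∑ v ∈ univ.filter (fun v : Fin s → Fin q => wt v = k),
              ‖contrast X v‖ ^ 2 := by
  classical
  have hmap : ∀ v ∈ (univ : Finset (Fin s → Fin q)), wt v ∈ range (s + 1) := by
    intro v _
    rw [Finset.mem_range]
    exact Nat.lt_succ_of_le (aux_wt_le v)
  rw [← Finset.sum_fiberwise_of_maps_to hmap
    (fun v => (auxCC s j (wt v) : ℝ) * ‖contrast X v‖ ^ 2)]
  have hstep : ∀ k ∈ range (s + 1),
      (∑ v ∈ univ.filter (fun v : Fin s → Fin q => wt v = k),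
        (auxCC s j (wt v) : ℝ) * ‖contrast X v‖ ^ 2)
      = (auxCC s j k : ℝ) * ∑ v ∈ univ.filter (fun v : Fin s → Fin q => wt v = k),
          ‖contrast X v‖ ^ 2 := by
    intro k _
    rw [Finset.mul_sum]
    refine Finset.sum_congr rfl fun v hv => ?_
    rw [(Finset.mem_filter.1 hv).2]
  rw [Finset.sum_congr rfl hstep]
  rw [show range (s + 1) = insert 0 (Icc 1 s) by ext k; simp; omega]
  rw [Finset.sum_insert (by simp)]
  congr 1
  · rw [aux_wt_eq_zero_filter s q hq, Finset.sum_singleton, aux_contrast_zero n s q hq X]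
    simp [auxCC]
  · rw [← Finset.sum_subset (Finset.Icc_subset_Icc_right hjs)
      (fun k hk hnk => ?_)]
    · refine Finset.sum_congr rfl fun k hk => ?_
      rw [Finset.mem_Icc] at hk
      congr 2
      simp [auxCC, hk.2]
    · have : ¬ k ≤ j := by
        rw [Finset.mem_Icc] at hk hnk
        omega
      simp [auxCC, this]

/-- Theorem 3 (identity): for a balanced design, the squared deviation
B_j²(X) = q^{−j} Ψ_C(X; j) is linearly related to the word-length pattern:
B_j²(X) = (n²/q^{2j}) ∑_{k=1}^{j} C(s−k, j−k) A_k(X). -/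
theorem deviation_wordlength_identity (n s q : ℕ) (hq : 2 ≤ q)
    (X : Fin n → Fin s → Fin q) (hX : IsBalanced X)
    (j : ℕ) (hj1 : 1 ≤ j) (hjs : j ≤ s) :
    PsiC X j / (q : ℝ) ^ j
      = (n : ℝ) ^ 2 / (q : ℝ) ^ (2 * j) *
          ∑ k ∈ Icc 1 j, ((s - k).choose (j - k) : ℝ) * wlp X k := by
  classical
  have hqj : ((q : ℝ)) ^ j ≠ 0 := pow_ne_zero _ (by positivity)
  rcases Nat.eq_zero_or_pos n with hn | hn
  · subst hn
    have hp : pairs 0 = ∅ := by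
      unfold pairs
      simp [Finset.filter_eq_empty_iff]
    simp [PsiC, hp, wlp]
  have hn0 : (n : ℝ) ≠ 0 := by positivity
  have key := aux_globalR n s q j hq X
  rw [aux_grouping n s q j hq hjs X] at key
  rw [aux_sum_pairs_decomp n _
    (fun p => by simp [aux_coincidence_comm (X p.2) (X p.1)])] at key
  simp only [aux_coincidence_self] at key
  rw [Finset.sum_const, Finset.card_univ, Fintype.card_fin, nsmul_eq_mul] at key
  have hwlp : ∑ k ∈ Icc 1 j, ((s - k).choose (j - k) : ℝ) * wlp X k
      = (∑ k ∈ Icc 1 j, ((s - k).choose (j - k) : ℝ) *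
          ∑ v ∈ univ.filter (fun v : Fin s → Fin q => wt v = k),
            ‖contrast X v‖ ^ 2) / (n : ℝ) ^ 2 := by
    rw [Finset.sum_div]
    refine Finset.sum_congr rfl fun k _ => ?_
    rw [wlp, mul_div_assoc]
  rw [hwlp]
  rw [PsiC]
  rw [show (2 : ℕ) * j = j + j from by ring, pow_add]
  field_simp
  linear_combination (-1 : ℝ) * key
end
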